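/- arXiv:1204.0208 — 3 statements merged into one kernel-verified Lean document; each statement's English description precedes it below -/
import Mathlib

section
/- Every point obtained by permuting the coordinates of (1, 2, ..., n+1) is an extreme point of the permutahedron Π^n; i.e., no such point lies in the convex hull of the others. -/
def permPoints (n : ℕ) : Set (Fin (n + 1) → ℝ) :=
  {p | ∃ σ : Equiv.Perm (Fin (n + 1)), p = fun i => ((σ i : ℕ) : ℝ) + 1}

def permutahedron (n : ℕ) : Set (Fin (n + 1) → ℝ) := convexHull ℝ (permPoints n)

lemma permPoints_normSq {n : ℕ} {p : Fin (n+1) → ℝ} (hp : p ∈ permPoints n) :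
    ∑ i, (p i)^2 = ∑ i : Fin (n+1), (((i : ℕ) : ℝ) + 1)^2 := by
  obtain ⟨σ, rfl⟩ := hp
  exact Equiv.sum_comp σ (fun j => (((j : ℕ) : ℝ) + 1)^2)

lemma permPoints_dot_lt {n : ℕ} {p q : Fin (n+1) → ℝ} (hp : p ∈ permPoints n)
    (hq : q ∈ permPoints n) (hne : q ≠ p) :
    ∑ i, q i * p i < ∑ i, (p i)^2 := by
  have h1 : ∑ i, (q i - p i)^2 = ∑ i, (q i)^2 + ∑ i, (p i)^2 - 2 * ∑ i, q i * p i := by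
    have step : ∀ i : Fin (n+1), (q i - p i)^2 = (q i)^2 + (p i)^2 - 2*(q i * p i) :=
      fun i => by ring
    calc ∑ i, (q i - p i)^2 = ∑ i, ((q i)^2 + (p i)^2 - 2*(q i * p i)) :=
          Finset.sum_congr rfl fun i _ => step i
      _ = ∑ i, (q i)^2 + ∑ i, (p i)^2 - 2 * ∑ i, q i * p i := by
          rw [Finset.sum_sub_distrib, Finset.sum_add_distrib, ← Finset.mul_sum]
  have h2 : 0 < ∑ i, (q i - p i)^2 := by
    obtain ⟨i, hi⟩ : ∃ i, q i ≠ p i := by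
      by_contra h
      push_neg at h
      exact hne (funext h)
    exact Finset.sum_pos' (fun j _ => sq_nonneg _)
      ⟨i, Finset.mem_univ i, by have h := sub_ne_zero.2 hi; positivity⟩
  have h3 := permPoints_normSq hp
  have h4 := permPoints_normSq hq
  nlinarith

lemma dot_isLinearMap {n : ℕ} (p : Fin (n+1) → ℝ) :
    IsLinearMap ℝ (fun x : Fin (n+1) → ℝ => ∑ i, x i * p i) := by
  constructor
  · intro x y
    rw [← Finset.sum_add_distrib]
    exact Finset.sum_congr rfl fun i _ => by simp [add_mul]
  · intro c x
    simp only [smul_eq_mul, Pi.smul_apply]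
    rw [Finset.mul_sum]
    exact Finset.sum_congr rfl fun i _ => by ring

lemma notMem_hull_diff {n : ℕ} {p : Fin (n+1) → ℝ} (hp : p ∈ permPoints n) :
    p ∉ convexHull ℝ (permPoints n \ {p}) := by
  intro h
  have hsub : convexHull ℝ (permPoints n \ {p}) ⊆ {x | ∑ i, x i * p i < ∑ i, (p i)^2} := by
    apply convexHull_min _ (convex_halfSpace_lt (dot_isLinearMap p) _)
    rintro q ⟨hq, hq'⟩
    exact permPoints_dot_lt hp hq (by simpa using hq')
  have := hsub h
  simp only [Set.mem_setOf_eq] at this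
  exact absurd this (by simp [sq])

lemma face_eq {n : ℕ} {p : Fin (n+1) → ℝ} (hp : p ∈ permPoints n)
    {x : Fin (n+1) → ℝ} (hx : x ∈ convexHull ℝ (permPoints n))
    (hgx : ∑ i, x i * p i = ∑ i, (p i)^2) : x = p := by
  rcases Set.eq_empty_or_nonempty (permPoints n \ {p}) with hemp | hne
  · have : permPoints n = {p} := by
      apply Set.eq_singleton_iff_unique_mem.2 ⟨hp, fun q hq => ?_⟩
      by_contra hqp
      exact Set.eq_empty_iff_forall_notMem.1 hemp q ⟨hq, hqp⟩
    rw [this, convexHull_singleton] at hx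
    exact hx
  · have hins : permPoints n = insert p (permPoints n \ {p}) := by
      rw [Set.insert_diff_singleton, Set.insert_eq_self.2 hp]
    rw [hins, convexHull_insert hne, mem_convexJoin] at hx
    obtain ⟨a, ha, b, hb, hseg⟩ := hx
    rw [Set.mem_singleton_iff] at ha
    rw [ha] at hseg
    obtain ⟨u, v, hu, hv, huv, rfl⟩ := hseg
    have hblt : ∑ i, b i * p i < ∑ i, (p i)^2 := by
      have hsub : convexHull ℝ (permPoints n \ {p}) ⊆
          {x | ∑ i, x i * p i < ∑ i, (p i)^2} := by
        apply convexHull_min _ (convex_halfSpace_lt (dot_isLinearMap p) _)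
        rintro q ⟨hq, hq'⟩
        exact permPoints_dot_lt hp hq (by simpa using hq')
      exact hsub hb
    have hlin : ∑ i, (u • p + v • b) i * p i
        = u * ∑ i, (p i * p i) + v * ∑ i, b i * p i := by
      rw [Finset.mul_sum, Finset.mul_sum, ← Finset.sum_add_distrib]
      exact Finset.sum_congr rfl fun i _ => by simp [mul_assoc]; ring
    rw [hlin] at hgx
    have hpp : ∑ i, (p i * p i) = ∑ i, (p i)^2 := by
      exact Finset.sum_congr rfl fun i _ => (sq (p i)).symm
    rw [hpp] at hgx
    have hv0 : v = 0 := by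
      by_contra hv0
      have hvpos : 0 < v := lt_of_le_of_ne hv (Ne.symm hv0)
      have hC : u * (∑ i, (p i)^2) + v * (∑ i, (p i)^2) = ∑ i, (p i)^2 := by
        rw [← add_mul, huv, one_mul]
      linarith [mul_lt_mul_of_pos_left hblt hvpos]
    have hu1 : u = 1 := by linarith
    simp [hv0, hu1]

/-- Every point obtained by permuting the coordinates of `(1, 2, …, n+1)` is an extreme point
of the permutahedron `Π^n`; equivalently, no such point lies in the convex hull of the
remaining ones. -/
theorem permPoints_extreme (n : ℕ) :
    (∀ p ∈ permPoints n, p ∈ Set.extremePoints ℝ (permutahedron n)) ∧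
      ∀ p ∈ permPoints n, p ∉ convexHull ℝ (permPoints n \ {p}) := by
  constructor
  · intro p hp
    rw [mem_extremePoints]
    refine ⟨subset_convexHull ℝ _ hp, fun x₁ hx₁ x₂ hx₂ hseg => ?_⟩
    have hle : ∀ x ∈ permutahedron n, ∑ i, x i * p i ≤ ∑ i, (p i)^2 := by
      intro x hx
      have hsub : permutahedron n ⊆ {x | ∑ i, x i * p i ≤ ∑ i, (p i)^2} := by
        apply convexHull_min _ (convex_halfSpace_le (dot_isLinearMap p) _)
        intro q hq
        rcases eq_or_ne q p with rfl | hqp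
        · simp [sq]
        · exact (permPoints_dot_lt hp hq hqp).le
      exact hsub hx
    obtain ⟨u, v, hu, hv, huv, heq⟩ := hseg
    have h1 := hle x₁ hx₁
    have h2 := hle x₂ hx₂
    have hlin : ∑ i, (u • x₁ + v • x₂) i * p i
        = u * ∑ i, x₁ i * p i + v * ∑ i, x₂ i * p i := by
      rw [Finset.mul_sum, Finset.mul_sum, ← Finset.sum_add_distrib]
      exact Finset.sum_congr rfl fun i _ => by simp; ring
    have hgp : ∑ i, p i * p i = ∑ i, (p i)^2 :=
      Finset.sum_congr rfl fun i _ => (sq (p i)).symm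
    have heqg : u * (∑ i, x₁ i * p i) + v * (∑ i, x₂ i * p i) = ∑ i, (p i)^2 := by
      rw [← hlin, heq, hgp]
    have hg1 : ∑ i, x₁ i * p i = ∑ i, (p i)^2 := by
      by_contra hne
      have h' : ∑ i, x₁ i * p i < ∑ i, (p i)^2 := lt_of_le_of_ne h1 hne
      have hC : u * (∑ i, (p i)^2) + v * (∑ i, (p i)^2) = ∑ i, (p i)^2 := by
        rw [← add_mul, huv, one_mul]
      linarith [mul_lt_mul_of_pos_left h' hu, mul_le_mul_of_nonneg_left h2 hv.le]
    have hg2 : ∑ i, x₂ i * p i = ∑ i, (p i)^2 := by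
      by_contra hne
      have h' : ∑ i, x₂ i * p i < ∑ i, (p i)^2 := lt_of_le_of_ne h2 hne
      have hC : u * (∑ i, (p i)^2) + v * (∑ i, (p i)^2) = ∑ i, (p i)^2 := by
        rw [← add_mul, huv, one_mul]
      linarith [mul_lt_mul_of_pos_left h' hv, mul_le_mul_of_nonneg_left h1 hu.le]
    exact ⟨face_eq hp hx₁ hg1, face_eq hp hx₂ hg2⟩
  · exact fun p hp => notMem_hull_diff hp
end

section
/- With notation as before, set s_ω = x_ω ψ_ω in the semidirect product F ⋊ Aut(F). Then s_ω^2 = 1 for every ω ∈ Ω, and s_{ω_1} s_{ω_2} = s_{ω_2} s_{ω_1} whenever ω_1 ⊆ ω_2. -/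
/-- `Ω`: the set of nonempty proper subsets of `{1, …, n+1}`. -/
def Om (n : ℕ) : Type := {ω : Finset (Fin (n + 1)) // ω.Nonempty ∧ ω ≠ Finset.univ}

/-- `F = ⟨x_ω, ω ∈ Ω ∣ x_ω² = 1⟩`: the free product of copies of `ℤ/2` indexed by `Ω`. -/
abbrev FGrp (n : ℕ) : Type := Monoid.CoprodI (fun _ : Om n => Multiplicative (ZMod 2))

/-- The generator `x_ω` of `F`. -/
def xgen {n : ℕ} (ω : Om n) : FGrp n :=
  Monoid.CoprodI.of (i := ω) (Multiplicative.ofAdd (1 : ZMod 2))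

open scoped Classical

open SemidirectProduct in
lemma xgen_sq {n : ℕ} (ω : Om n) : xgen ω * xgen ω = 1 := by
  have h : (Multiplicative.ofAdd (1 : ZMod 2)) * Multiplicative.ofAdd (1 : ZMod 2) = 1 := by decide
  rw [xgen, ← map_mul, h, map_one]

lemma sq_cancel {n : ℕ} (ω : Om n) (y : FGrp n) : xgen ω * (xgen ω * y) = y := by
  rw [← mul_assoc, xgen_sq, one_mul]

lemma hom_ext' {n : ℕ} {N : Type*} [Monoid N] (f g : FGrp n →* N)
    (h : ∀ ω, f (xgen ω) = g (xgen ω)) : f = g := by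
  apply Monoid.CoprodI.ext_hom
  intro i
  apply MonoidHom.ext
  intro m
  have hm : ∀ m : Multiplicative (ZMod 2), m = 1 ∨ m = Multiplicative.ofAdd 1 := by decide
  rcases hm m with rfl | rfl
  · simp
  · simpa [xgen] using h i

lemma aut_ext' {n : ℕ} (f g : MulAut (FGrp n)) (h : ∀ ω, f (xgen ω) = g (xgen ω)) : f = g :=
  MulEquiv.toMonoidHom_injective (hom_ext' _ _ h)

open SemidirectProduct in
lemma prod_mul' {n : ℕ} (a b : FGrp n) (f g : MulAut (FGrp n)) :
    ((inl a * inr f : FGrp n ⋊[MonoidHom.id (MulAut (FGrp n))] MulAut (FGrp n)) * (inl b * inr g))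
      = inl (a * f b) * inr (f * g) := by
  ext <;> simp


/-- With `ψ_ω ∈ Aut F` defined by `ψ_ω(x_γ) = x_ω x_γ x_ω` for `γ ⊆ ω` and `ψ_ω(x_γ) = x_γ`
otherwise, the elements `s_ω = x_ω ψ_ω` of the semidirect product `F ⋊ Aut F` satisfy
`s_ω² = 1` for all `ω`, and `s_{ω₁} s_{ω₂} = s_{ω₂} s_{ω₁}` whenever `ω₁ ⊆ ω₂`. -/
theorem s_relations (n : ℕ) (ψ : Om n → MulAut (FGrp n))
    (hψ : ∀ ω γ : Om n, ψ ω (xgen γ) =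
      if γ.1 ⊆ ω.1 then xgen ω * xgen γ * xgen ω else xgen γ)
    (s : Om n → FGrp n ⋊[MonoidHom.id (MulAut (FGrp n))] MulAut (FGrp n))
    (hs : ∀ ω, s ω = SemidirectProduct.inl (xgen ω) * SemidirectProduct.inr (ψ ω)) :
    (∀ ω, s ω * s ω = 1) ∧
      ∀ ω₁ ω₂ : Om n, ω₁.1 ⊆ ω₂.1 → s ω₁ * s ω₂ = s ω₂ * s ω₁ := by
  constructor
  · intro ω
    rw [hs, prod_mul']
    have hx : ψ ω (xgen ω) = xgen ω := by
      rw [hψ, if_pos (subset_refl _), xgen_sq, one_mul]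
    have hpsi : ψ ω * ψ ω = 1 := by
      apply aut_ext'
      intro γ
      by_cases hγ : γ.1 ⊆ ω.1 <;>
        simp [MulAut.mul_apply, hψ, hγ, mul_assoc, sq_cancel, xgen_sq]
    rw [hx, xgen_sq, hpsi]
    simp
  · intro ω₁ ω₂ h12
    by_cases heq : ω₁ = ω₂
    · rw [heq]
    have hn21 : ¬ ω₂.1 ⊆ ω₁.1 := fun h => heq (Subtype.ext (subset_antisymm h12 h))
    rw [hs, hs, prod_mul', prod_mul']
    have hleft : xgen ω₁ * ψ ω₁ (xgen ω₂) = xgen ω₂ * ψ ω₂ (xgen ω₁) := by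
      rw [hψ, hψ, if_neg hn21, if_pos h12]
      simp [mul_assoc, sq_cancel, xgen_sq]
    have hright : ψ ω₁ * ψ ω₂ = ψ ω₂ * ψ ω₁ := by
      apply aut_ext'
      intro γ
      by_cases h2 : γ.1 ⊆ ω₂.1
      · by_cases h1 : γ.1 ⊆ ω₁.1 <;>
          simp [MulAut.mul_apply, hψ, h1, h2, h12, hn21, Finset.Subset.refl,
            mul_assoc, sq_cancel, xgen_sq]
      · have h1 : ¬ γ.1 ⊆ ω₁.1 := fun h => h2 (h.trans h12)
        simp [MulAut.mul_apply, hψ, h1, h2]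
    rw [hleft, hright]
end

section
/- Let F be a finitely generated group and H̄ ≤ F a subgroup of finite index. Then the subgroup Ψ_H = {ψ ∈ Aut(F) : ψ(x)H̄ = xH̄ for all x ∈ F} has finite index in Aut(F). -/
/-!
Let `Aut F` act on functions out of `F` by precomposition. Then `Ψ_H` is the stabilizer of the
projection `F → F ⧸ H`, and it contains the stabilizer of the projection onto `F ⧸ N`, where `N` is
the normal core of `H`. The orbit of the latter projection consists of homomorphisms into the
finite group `F ⧸ N`, and a finitely generated group has only finitely many of those, so the orbit
is finite and its stabilizer has finite index.
-/

theorem MonoidHom.finite_of_fg (G Q : Type*) [Group G] [Group.FG G] [Monoid Q] [Finite Q] :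
    Finite (G →* Q) := by
  obtain ⟨S, hS, hSfin⟩ := Group.fg_iff.mp ‹Group.FG G›
  have := hSfin.to_subtype
  refine Finite.of_injective (fun f : G →* Q => S.domRestrict f) fun f g hfg => ?_
  exact MonoidHom.eq_of_eqOn_dense hS fun x hx => congrFun hfg ⟨x, hx⟩

theorem MulAction.finiteIndex_stabilizer_of_finite_orbit {G X : Type*} [Group G] [MulAction G X]
    {x : X} (h : (orbit G x).Finite) : (stabilizer G x).FiniteIndex :=
  ⟨by rw [index_stabilizer]; exact ((Set.ncard_pos h).2 ⟨x, mem_orbit_self x⟩).ne'⟩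

attribute [local instance] arrowAction

namespace MulAut

theorem orbit_coe_monoidHom_subset_range {F Q : Type*} [Monoid F] [Monoid Q] (f : F →* Q) :
    MulAction.orbit (MulAut F) (f : F → Q) ⊆ Set.range ((↑) : (F →* Q) → F → Q) := by
  rintro _ ⟨ψ, rfl⟩
  exact ⟨f.comp (ψ⁻¹ : MulAut F).toMonoidHom, rfl⟩

theorem mem_stabilizer_quotientMk_iff {F : Type*} [Group F] {H : Subgroup F} {ψ : MulAut F} :
    ψ ∈ MulAction.stabilizer (MulAut F) (QuotientGroup.mk : F → F ⧸ H) ↔ ∀ x, x⁻¹ * ψ x ∈ H := by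
  rw [MulAction.mem_stabilizer_iff, eq_comm, ← inv_smul_eq_iff, funext_iff]
  refine forall_congr' fun x => ?_
  change ((ψ x : F) : F ⧸ H) = x ↔ _
  rw [eq_comm, QuotientGroup.eq]

end MulAut

/-- Let `F` be a finitely generated group and `H̄ ≤ F` a subgroup of finite index. Then the
subgroup `Ψ_H = {ψ ∈ Aut F : ψ(x)H̄ = xH̄ for all x}` has finite index in `Aut F`. -/
theorem psiH_finiteIndex (F : Type) [Group F] (hFG : Group.FG F) (H : Subgroup F)
    (hH : H.FiniteIndex) :
    ∃ S : Subgroup (MulAut F),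
      (S : Set (MulAut F)) = {ψ : MulAut F | ∀ x : F, x⁻¹ * ψ x ∈ H} ∧ S.FiniteIndex := by
  refine ⟨MulAction.stabilizer (MulAut F) (QuotientGroup.mk : F → F ⧸ H),
    Set.ext fun ψ => MulAut.mem_stabilizer_quotientMk_iff, ?_⟩
  let N := H.normalCore
  have : Finite (F →* F ⧸ N) := MonoidHom.finite_of_fg F (F ⧸ N)
  have : (MulAction.stabilizer (MulAut F) (QuotientGroup.mk : F → F ⧸ N)).FiniteIndex :=
    MulAction.finiteIndex_stabilizer_of_finite_orbit <| (Set.finite_range _).subset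
      (MulAut.orbit_coe_monoidHom_subset_range (QuotientGroup.mk' N))
  exact Subgroup.finiteIndex_of_le fun ψ hψ =>
    MulAut.mem_stabilizer_quotientMk_iff.2 fun x =>
      H.normalCore_le (MulAut.mem_stabilizer_quotientMk_iff.1 hψ x)
end
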